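/- Let K be a field of characteristic 0, α ≠ β ∈ K, and m, n, d natural numbers with 0 ≤ d < min(m,n). Write Sres_d((x-α)^m,(x-β)^n) = ∑_{k=0}^d s_k x^k and set s_{d+1} = 0. Then for k = d-1 down to 0: (d-k)(m+n-d-k-1)·s_k = -(k+1)·( ((n-k-1)α + (m-k-1)β)·s_{k+1} + (k+2)·α·β·s_{k+2} ). -/

import Mathlib

/-
Write `P = Sres_d((X - α)^m, (X - β)^n)`. Cofactor expansion along the last column of the
subresultant matrix gives `P = u (X - α)^m + v (X - β)^n` with `deg v < m - d`, and the repeated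
columns give `deg P ≤ d`. The operator
`L = (X - α)(X - β) D² + ((2 - m - n) X + (n - 1) α + (m - 1) β) D + d (m + n - d - 1)`
satisfies `L (w (X - α)^m) = L₁ w · (X - α)^m` and `L (w (X - β)^n) = L₂ w · (X - β)^n` for
operators `L₁`, `L₂` that do not raise degrees, and its constant term makes the `X^d`
coefficient of `L P` vanish. So `L P = U (X - α)^m + V (X - β)^n` has degree `< d` with
`deg V < m - d`; differentiating `d` times reduces this to the coprime case, whence `U = V = 0`.
Hence `L P = 0`, and its `X^k` coefficient is the recurrence.
-/

open Polynomial

/-- The order-`d` polynomial subresultant of `f` (of nominal degree `m`) and `g`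
(of nominal degree `n`): the determinant of the `(m+n-2d) × (m+n-2d)` matrix whose
first `n-d` rows hold the coefficients of `f` (with last column `x^(n-d-1-i)·f`) and
whose last `m-d` rows hold the coefficients of `g` (with last column `x^(m-d-1-i)·g`). -/
noncomputable def Sres {R : Type*} [CommRing R] (m n d : ℕ) (f g : Polynomial R) :
    Polynomial R :=
  (Matrix.of (fun i j : Fin (m + n - 2 * d) =>
    if (i : ℕ) < n - d then
      if (j : ℕ) = m + n - 2 * d - 1 then X ^ (n - d - 1 - (i : ℕ)) * f
      else if (j : ℕ) ≤ m + (i : ℕ) then C (f.coeff (m + (i : ℕ) - (j : ℕ))) else 0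
    else
      if (j : ℕ) = m + n - 2 * d - 1 then X ^ (m - d - 1 - ((i : ℕ) - (n - d))) * g
      else if (j : ℕ) ≤ n + ((i : ℕ) - (n - d)) then
        C (g.coeff (n + ((i : ℕ) - (n - d)) - (j : ℕ))) else 0)).det

namespace Polynomial

variable {R : Type*} [CommRing R]

theorem coeff_X_mul_derivative (p : R[X]) (k : ℕ) :
    (X * derivative p).coeff k = k * p.coeff k := by
  cases k with
  | zero => simp [mul_coeff_zero]
  | succ k => rw [coeff_X_mul, coeff_derivative]; push_cast; ring

theorem coeff_X_sq_mul_derivative_derivative (p : R[X]) (k : ℕ) :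
    (X ^ 2 * derivative (derivative p)).coeff k = k * (k - 1) * p.coeff k := by
  have h : X ^ 2 * derivative (derivative p)
      = X * derivative (X * derivative p) - X * derivative p := by
    rw [derivative_mul, derivative_X]; ring
  rw [h, coeff_sub, coeff_X_mul_derivative, coeff_X_mul_derivative]
  ring

theorem coeff_X_sub_C_mul_derivative_add_C_mul (γ r : R) (p : R[X]) (k : ℕ) :
    ((X - C γ) * derivative p + C r * p).coeff k
      = (k + r) * p.coeff k - γ * (k + 1) * p.coeff (k + 1) := by
  rw [sub_mul, coeff_add, coeff_sub, coeff_X_mul_derivative, coeff_C_mul, coeff_C_mul,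
    coeff_derivative]
  ring

theorem X_sub_C_mul_derivative_X_sub_C_pow (γ : R) (r : ℕ) :
    (X - C γ) * derivative ((X - C γ) ^ r) = C (r : R) * (X - C γ) ^ r := by
  rw [derivative_X_sub_C_pow]
  rcases r with _ | r
  · simp
  · rw [pow_succ' _ r, Nat.add_sub_cancel]; ring

theorem X_sub_C_mul_derivative_derivative_X_sub_C_pow (γ : R) (r : ℕ) :
    (X - C γ) * derivative (derivative ((X - C γ) ^ r))
      = C ((r : R) - 1) * derivative ((X - C γ) ^ r) := by
  rcases r with _ | r
  · simp
  · rw [derivative_X_sub_C_pow, derivative_mul, derivative_C, zero_mul, zero_add,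
      mul_left_comm, Nat.add_sub_cancel, X_sub_C_mul_derivative_X_sub_C_pow]
    rw [Nat.cast_succ, add_sub_cancel_right]
    ring

theorem degree_X_sub_C_mul_derivative_add_C_mul_lt (γ r : R) {u : R[X]} {N : ℕ}
    (hu : u.degree < N) : ((X - C γ) * derivative u + C r * u).degree < (N : WithBot ℕ) := by
  rw [degree_lt_iff_coeff_zero] at hu ⊢
  intro k hk
  rw [coeff_X_sub_C_mul_derivative_add_C_mul, hu k hk, hu (k + 1) (by omega)]
  ring

theorem derivative_mul_X_sub_C_pow_succ (γ : R) (r : ℕ) (u : R[X]) :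
    derivative (u * (X - C γ) ^ (r + 1))
      = ((X - C γ) * derivative u + C ((r + 1 : ℕ) : R) * u) * (X - C γ) ^ r := by
  rw [derivative_mul, derivative_X_sub_C_pow, Nat.add_sub_cancel, pow_succ]
  ring

theorem eq_zero_of_X_sub_C_mul_derivative_add_C_mul_eq_zero [IsDomain R] [CharZero R] (γ : R)
    {r : ℕ} (hr : 0 < r) {u : R[X]} (h : (X - C γ) * derivative u + C (r : R) * u = 0) :
    u = 0 := by
  by_contra hu
  have hk := coeff_X_sub_C_mul_derivative_add_C_mul γ r u u.natDegree
  rw [h, coeff_zero, coeff_eq_zero_of_natDegree_lt (Nat.lt_succ_self _), mul_zero, sub_zero,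
    eq_comm] at hk
  have hkr : ((u.natDegree + r : ℕ) : R) ≠ 0 := Nat.cast_ne_zero.mpr (by omega)
  push_cast at hkr
  exact hu (leadingCoeff_eq_zero.mp ((mul_eq_zero.mp hk).resolve_left hkr))

theorem eq_zero_of_isCoprime_of_mul_add_mul_eq_zero [IsDomain R] {f g u v : R[X]}
    (hfg : IsCoprime f g) (hv : v.degree < f.degree) (h : u * f + v * g = 0) :
    u = 0 ∧ v = 0 := by
  have hf : f ≠ 0 := by
    rintro rfl
    exact not_lt_bot (degree_zero (R := R) ▸ hv)
  have hv0 : v = 0 := by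
    by_contra hv0
    have hdvd : f ∣ v := hfg.dvd_of_dvd_mul_right ⟨-u, by linear_combination h⟩
    exact (degree_le_of_dvd hdvd hv0).not_gt hv
  refine ⟨?_, hv0⟩
  rw [hv0, zero_mul, add_zero] at h
  exact (mul_eq_zero.mp h).resolve_right hf

theorem eq_zero_of_degree_mul_X_sub_C_pow_add_mul_X_sub_C_pow_lt [IsDomain R] [CharZero R]
    {α β : R} (hαβ : IsUnit (α - β)) {d m n : ℕ} (hm : d < m) (hn : d < n) {u v : R[X]}
    (hv : v.degree < ↑(m - d))
    (h : (u * (X - C α) ^ m + v * (X - C β) ^ n).degree < (d : WithBot ℕ)) :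
    u = 0 ∧ v = 0 := by
  induction d generalizing m n u v with
  | zero =>
    have hcop : IsCoprime ((X - C α) ^ m) ((X - C β) ^ n) :=
      (isCoprime_X_sub_C_of_isUnit_sub hαβ).pow
    refine eq_zero_of_isCoprime_of_mul_add_mul_eq_zero hcop ?_ ?_
    · simpa [degree_pow] using hv
    · rwa [Nat.cast_zero, Nat.WithBot.lt_zero_iff, degree_eq_bot] at h
  | succ d ih =>
    obtain ⟨m, rfl⟩ : ∃ m', m = m' + 1 := ⟨m - 1, by omega⟩
    obtain ⟨n, rfl⟩ : ∃ n', n = n' + 1 := ⟨n - 1, by omega⟩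
    set u₁ := (X - C α) * derivative u + C ((m + 1 : ℕ) : R) * u
    set v₁ := (X - C β) * derivative v + C ((n + 1 : ℕ) : R) * v
    have hv₁ : v₁.degree < ↑(m - d) :=
      degree_X_sub_C_mul_derivative_add_C_mul_lt β _ (by simpa using hv)
    have h₁ : (u₁ * (X - C α) ^ m + v₁ * (X - C β) ^ n).degree < (d : WithBot ℕ) := by
      rw [← derivative_mul_X_sub_C_pow_succ, ← derivative_mul_X_sub_C_pow_succ,
        ← derivative_add]
      rw [degree_lt_iff_coeff_zero] at h ⊢
      intro k hk
      rw [coeff_derivative, h (k + 1) (by omega), zero_mul]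
    obtain ⟨hu₁, hv₁⟩ := ih (by omega) (by omega) hv₁ h₁
    exact ⟨eq_zero_of_X_sub_C_mul_derivative_add_C_mul_eq_zero α m.succ_pos hu₁,
      eq_zero_of_X_sub_C_mul_derivative_add_C_mul_eq_zero β n.succ_pos hv₁⟩

noncomputable def diffOp (a b A B c : R) (u : R[X]) : R[X] :=
  (X - C a) * (X - C b) * derivative (derivative u) + (C A * X + C B) * derivative u + C c * u

section DiffOp

variable (a b A B c : R)

theorem diffOp_add (u v : R[X]) :
    diffOp a b A B c (u + v) = diffOp a b A B c u + diffOp a b A B c v := by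
  simp only [diffOp, derivative_add]; ring

theorem diffOp_comm (u : R[X]) : diffOp a b A B c u = diffOp b a A B c u := by
  simp only [diffOp]; ring

theorem coeff_diffOp (u : R[X]) (k : ℕ) :
    (diffOp a b A B c u).coeff k
      = (k * (k - 1) + A * k + c) * u.coeff k + (k + 1) * (B - (a + b) * k) * u.coeff (k + 1)
        + a * b * (k + 1) * (k + 2) * u.coeff (k + 2) := by
  have h : diffOp a b A B c u = X ^ 2 * derivative (derivative u)
      - C (a + b) * (X * derivative (derivative u)) + C (a * b) * derivative (derivative u)
      + C A * (X * derivative u) + C B * derivative u + C c * u := by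
    simp only [diffOp, C_add, C_mul]; ring
  simp only [h, coeff_add, coeff_sub, coeff_C_mul, coeff_X_sq_mul_derivative_derivative,
    coeff_X_mul_derivative, coeff_derivative]
  push_cast; ring

theorem degree_diffOp_lt {u : R[X]} {N : ℕ} (hu : u.degree < N) :
    (diffOp a b A B c u).degree < N := by
  rw [degree_lt_iff_coeff_zero] at hu ⊢
  intro k hk
  rw [coeff_diffOp, hu k hk, hu (k + 1) (by omega), hu (k + 2) (by omega)]
  ring

theorem degree_diffOp_lt_of_degree_le {u : R[X]} {d : ℕ} (hu : u.degree ≤ d)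
    (hd : d * (d - 1) + A * d + c = 0) : (diffOp a b A B c u).degree < d := by
  rw [degree_le_iff_coeff_zero] at hu
  rw [degree_lt_iff_coeff_zero]
  intro k hk
  rw [coeff_diffOp, hu (k + 1) (by norm_cast; omega), hu (k + 2) (by norm_cast; omega)]
  rcases hk.eq_or_lt with rfl | hk
  · rw [hd]; ring
  · rw [hu k (by exact_mod_cast hk)]; ring

end DiffOp

theorem diffOp_mul_X_sub_C_pow (r ρ : ℕ) (γ δ c : R) (u : R[X]) :
    diffOp γ δ (2 - r - ρ) ((ρ - 1) * γ + (r - 1) * δ) c (u * (X - C γ) ^ r)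
      = diffOp γ δ (r - ρ + 2) ((ρ - 1) * γ - (r + 1) * δ) (c - r * (ρ - 1)) u
          * (X - C γ) ^ r := by
  have h1 := X_sub_C_mul_derivative_X_sub_C_pow γ r
  have h2 := X_sub_C_mul_derivative_derivative_X_sub_C_pow γ r
  simp only [diffOp, derivative_mul, derivative_add, C_add, C_sub, C_mul, C_1, map_ofNat,
    map_natCast] at h1 h2 ⊢
  linear_combination (2 * (X - C δ) * derivative u + (1 - (ρ : R[X])) * u) * h1
    + (X - C δ) * u * h2

theorem diffOp_eq_zero_of_eq_mul_add_mul [IsDomain R] [CharZero R] {α β : R}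
    (hαβ : IsUnit (α - β)) {d m n : ℕ} (hm : d < m) (hn : d < n) {P u v : R[X]}
    (hP : P = u * (X - C α) ^ m + v * (X - C β) ^ n) (hv : v.degree < ↑(m - d))
    (hdeg : P.degree ≤ d) :
    diffOp α β (2 - m - n) ((n - 1) * α + (m - 1) * β) (d * (m + n - d - 1)) P = 0 := by
  set c : R := d * (m + n - d - 1)
  have hv_mul : diffOp α β (2 - m - n) ((n - 1) * α + (m - 1) * β) c (v * (X - C β) ^ n)
      = diffOp β α (n - m + 2) ((m - 1) * β - (n + 1) * α) (c - n * (m - 1)) v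
          * (X - C β) ^ n := by
    rw [diffOp_comm, ← diffOp_mul_X_sub_C_pow]
    congr 1 <;> ring
  have hsplit : diffOp α β (2 - m - n) ((n - 1) * α + (m - 1) * β) c P
      = diffOp α β (m - n + 2) ((n - 1) * α - (m + 1) * β) (c - m * (n - 1)) u * (X - C α) ^ m
        + diffOp β α (n - m + 2) ((m - 1) * β - (n + 1) * α) (c - n * (m - 1)) v
          * (X - C β) ^ n := by
    rw [hP, diffOp_add, diffOp_mul_X_sub_C_pow, hv_mul]
  obtain ⟨hU, hV⟩ := eq_zero_of_degree_mul_X_sub_C_pow_add_mul_X_sub_C_pow_lt hαβ hm hn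
    (degree_diffOp_lt _ _ _ _ _ hv)
    (hsplit ▸ degree_diffOp_lt_of_degree_le _ _ _ _ _ hdeg (by ring))
  rw [hsplit, hU, hV, zero_mul, zero_mul, add_zero]

end Polynomial

section Sres

variable {R : Type*} [CommRing R]

theorem Matrix.det_updateCol_map_C {ι : Type*} [Fintype ι] [DecidableEq ι] (A : Matrix ι ι R)
    (j : ι) (v : ι → R[X]) :
    ((A.map C).updateCol j v).det = ∑ i, C (A.adjugate j i) * v i := by
  rw [← cramer_apply, cramer_eq_adjugate_mulVec, ← RingHom.mapMatrix_apply,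
    ← RingHom.map_adjugate]
  rfl

variable (m n d : ℕ) (f g : R[X])

noncomputable def sresLastCol (i : Fin (m + n - 2 * d)) : R[X] :=
  if (i : ℕ) < n - d then X ^ (n - d - 1 - (i : ℕ)) * f
  else X ^ (m - d - 1 - ((i : ℕ) - (n - d))) * g

noncomputable def sresCoeffMatrix : Matrix (Fin (m + n - 2 * d)) (Fin (m + n - 2 * d)) R :=
  Matrix.of fun i j => (sresLastCol m n d f g i).coeff (m + n - d - 1 - j)

theorem Sres_eq_det_updateCol {j : Fin (m + n - 2 * d)} (hj : (j : ℕ) = m + n - 2 * d - 1) :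
    Sres m n d f g
      = (((sresCoeffMatrix m n d f g).map C).updateCol j (sresLastCol m n d f g)).det := by
  unfold Sres
  congr 1
  ext i k : 1
  by_cases hk : k = j
  · subst hk
    simp only [Matrix.updateCol_self, Matrix.of_apply, hj, if_true, sresLastCol]
  · have hk' : (k : ℕ) ≠ m + n - 2 * d - 1 := fun h => hk (Fin.ext (h.trans hj.symm))
    have hi := i.isLt
    have hkN := k.isLt
    rw [Matrix.updateCol_ne hk]
    simp only [Matrix.of_apply, Matrix.map_apply, sresCoeffMatrix, sresLastCol, if_neg hk']
    split_ifs <;> rw [coeff_X_pow_mul'] <;> split_ifs <;>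
      first | rfl | exact C_0.symm | (congr 2; omega)

theorem Sres_eq_sum {j : Fin (m + n - 2 * d)} (hj : (j : ℕ) = m + n - 2 * d - 1) :
    Sres m n d f g
      = ∑ i, C ((sresCoeffMatrix m n d f g).adjugate j i) * sresLastCol m n d f g i := by
  rw [Sres_eq_det_updateCol m n d f g hj, Matrix.det_updateCol_map_C]

theorem exists_Sres_eq_mul_add_mul (hN : 0 < m + n - 2 * d) :
    ∃ u v : R[X], v.degree < ↑(m - d) ∧ Sres m n d f g = u * f + v * g := by
  set q := (sresCoeffMatrix m n d f g).adjugate ⟨m + n - 2 * d - 1, by omega⟩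
  refine ⟨∑ i, C (q i) * if (i : ℕ) < n - d then X ^ (n - d - 1 - (i : ℕ)) else 0,
    ∑ i, C (q i) * if (i : ℕ) < n - d then 0 else X ^ (m - d - 1 - ((i : ℕ) - (n - d))), ?_, ?_⟩
  · rw [← mem_degreeLT]
    refine Submodule.sum_mem _ fun i _ => ?_
    rw [← smul_eq_C_mul]
    refine Submodule.smul_mem _ _ ?_
    split_ifs with hi
    · exact Submodule.zero_mem _
    · have := i.isLt
      exact mem_degreeLT.mpr ((degree_X_pow_le _).trans_lt (by exact_mod_cast (by omega)))
  · rw [Sres_eq_sum m n d f g (j := ⟨m + n - 2 * d - 1, by omega⟩) rfl, Finset.sum_mul,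
      Finset.sum_mul, ← Finset.sum_add_distrib]
    refine Finset.sum_congr rfl fun i _ => ?_
    unfold sresLastCol
    split_ifs <;> ring

theorem natDegree_sresLastCol_lt (hf : f.natDegree ≤ m) (hg : g.natDegree ≤ n)
    (i : Fin (m + n - 2 * d)) : (sresLastCol m n d f g i).natDegree < m + n - d := by
  have hi := i.isLt
  unfold sresLastCol
  split_ifs
  · exact (natDegree_mul_le.trans (add_le_add (natDegree_X_pow_le _) hf)).trans_lt (by omega)
  · exact (natDegree_mul_le.trans (add_le_add (natDegree_X_pow_le _) hg)).trans_lt (by omega)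

theorem degree_Sres_le (hN : 0 < m + n - 2 * d) (hf : f.natDegree ≤ m) (hg : g.natDegree ≤ n) :
    (Sres m n d f g).degree ≤ d := by
  set j : Fin (m + n - 2 * d) := ⟨m + n - 2 * d - 1, by omega⟩
  rw [degree_le_iff_coeff_zero, Sres_eq_sum m n d f g (j := j) rfl]
  intro E hE
  have hdE : d < E := by exact_mod_cast hE
  simp only [finsetSum_coeff, coeff_C_mul]
  by_cases hET : E < m + n - d
  · -- the `X ^ E` coefficients of the last column form column `j₀` of `M := sresCoeffMatrix`,
    -- so the sum is the off-diagonal entry `(adjugate M * M) j j₀ = 0`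
    set j₀ : Fin (m + n - 2 * d) := ⟨m + n - d - 1 - E, by omega⟩
    have hcol : ∀ i, (sresLastCol m n d f g i).coeff E = sresCoeffMatrix m n d f g i j₀ := by
      intro i
      simp only [sresCoeffMatrix, Matrix.of_apply, j₀]
      congr 1
      omega
    have hne : j ≠ j₀ := by
      simp only [j, j₀, ne_eq, Fin.mk.injEq]
      omega
    simp only [hcol]
    rw [← Matrix.mul_apply, Matrix.adjugate_mul, Matrix.smul_apply, Matrix.one_apply_ne hne,
      smul_zero]
  · refine Finset.sum_eq_zero fun i _ => ?_
    rw [coeff_eq_zero_of_natDegree_lt ((natDegree_sresLastCol_lt m n d f g hf hg i).trans_le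
      (not_lt.mp hET)), mul_zero]

end Sres

theorem subresultant_coeff_recurrence {K : Type*} [Field K] [CharZero K]
    (α β : K) (hαβ : α ≠ β) (m n d : ℕ) (hm : d < m) (hn : d < n)
    (s : ℕ → K) (hs : ∀ k, s k = (Sres m n d ((X - C α) ^ m) ((X - C β) ^ n)).coeff k) :
    ∀ k, k < d →
      (((d - k : ℕ) : K) * ((m : K) + (n : K) - (d : K) - (k : K) - 1)) * s k
        = -((k : K) + 1) *
            ((((n : K) - (k : K) - 1) * α + ((m : K) - (k : K) - 1) * β) * s (k + 1)
              + ((k : K) + 2) * α * β * s (k + 2)) := by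
  intro k hk
  obtain ⟨u, v, hv, hP⟩ :=
    exists_Sres_eq_mul_add_mul m n d ((X - C α) ^ m) ((X - C β) ^ n) (by omega)
  have hdeg := degree_Sres_le m n d ((X - C α) ^ m) ((X - C β) ^ n) (by omega)
    (by simp [natDegree_pow]) (by simp [natDegree_pow])
  have hL := diffOp_eq_zero_of_eq_mul_add_mul (sub_ne_zero.mpr hαβ).isUnit hm hn hP hv hdeg
  have hk' := congrArg (coeff · k) hL
  simp only [coeff_diffOp, coeff_zero] at hk'
  rw [hs, hs, hs, Nat.cast_sub hk.le]
  linear_combination hk'
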